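/- The curve C₇ = {F₇ = 0} ⊂ P² (F₇ as in the Appendix) has multiplicity exactly 3 at p₀ = [0:0:1] and at p₅ = [3:2i:1], and multiplicity exactly 2 at each of p₁ = [-2:1:1], p₂ = [2:1:1], p₃ = [-1:2:1], p₄ = [1:2:1]. -/

import Mathlib

/-! Multiplicity is read off from partial derivatives. Differentiation commutes with the shift
`p ↦ p(X + c)` and lowers the degree of every homogeneous component by one, and by Euler's
identity a form of positive degree in characteristic zero vanishes iff all its first partials do.
Hence the shifted polynomial has no components of degree `< m` iff every partial derivative of
order `< m` vanishes at `c`, and its degree-`m` component is nonzero as soon as one partial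
derivative of order `m` is nonzero at `c`. At the six points these are finitely many evaluations
of derivatives of `F₇`. -/

open MvPolynomial

/-- The septic F₇ of the Appendix in the affine chart z = 1, over ℚ(i) ⊆ ℂ. -/
noncomputable def f₇ : MvPolynomial (Fin 2) ℂ :=
  let x : MvPolynomial (Fin 2) ℂ := X 0
  let y : MvPolynomial (Fin 2) ℂ := X 1
  let i : ℂ := Complex.I
  12*x^7 + C (8*i+420)*x^6*y + 1611*x^5*y^2 + C (174*i+3060)*x^4*y^3 +
  4086*x^3*y^4 + C (924*i+3360)*x^2*y^5 + 987*x*y^6 + C (-242*i+720)*y^7 -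
  560*x^6 - 4320*x^5*y + C (-480*i-13580)*x^4*y^2 - 23940*x^3*y^3 +
  C (-5160*i-24980)*x^2*y^4 - 10620*x*y^5 + C (1320*i-6960)*y^6 +
  2760*x^5 + C (240*i+16200)*x^4*y + 44970*x^3*y^2 + C (9780*i+63900)*x^2*y^3 +
  39210*x*y^4 + C (-2460*i+25200)*y^5 - 4400*x^4 - 28800*x^3*y +
  C (-7200*i-62300)*x^2*y^2 - 60300*x*y^3 + C (1800*i-40400)*y^4 +
  2700*x^3 + C (1800*i+16500)*x^2*y + 33075*x*y^2 + C (-450*i+24000)*y^3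

/-- Recentering of an affine plane curve at the point (a,b). -/
noncomputable def shiftAt (a b : ℂ) (f : MvPolynomial (Fin 2) ℂ) : MvPolynomial (Fin 2) ℂ :=
  aeval ![X 0 + C a, X 1 + C b] f

/-- Multiplicity of the affine curve f = 0 at the origin is exactly m. -/
def multIs (f : MvPolynomial (Fin 2) ℂ) (m : ℕ) : Prop :=
  (∀ k < m, homogeneousComponent k f = 0) ∧ homogeneousComponent m f ≠ 0

namespace MvPolynomial

variable {σ R : Type*} [CommSemiring R]

lemma pderiv_ofNat (i : σ) (n : ℕ) [n.AtLeastTwo] :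
    pderiv i (no_index (OfNat.ofNat n : MvPolynomial σ R)) = 0 := by
  rw [← map_ofNat C n, pderiv_C]

lemma homogeneousComponent_pderiv (k : ℕ) (i : σ) (p : MvPolynomial σ R) :
    homogeneousComponent k (pderiv i p) = pderiv i (homogeneousComponent (k + 1) p) := by
  ext d
  simp only [coeff_homogeneousComponent, coeff_pderiv, map_add, Finsupp.degree_single,
    add_left_inj, ite_mul, zero_mul]

noncomputable def iteratedPDeriv : List σ → MvPolynomial σ R → MvPolynomial σ R
  | [], p => p
  | i :: l, p => iteratedPDeriv l (pderiv i p)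

lemma iteratedPDeriv_zero (l : List σ) : iteratedPDeriv l (0 : MvPolynomial σ R) = 0 := by
  induction l with
  | nil => rfl
  | cons i l ih => simp [iteratedPDeriv, ih]

lemma homogeneousComponent_iteratedPDeriv (l : List σ) (k : ℕ) (p : MvPolynomial σ R) :
    homogeneousComponent k (iteratedPDeriv l p) =
      iteratedPDeriv l (homogeneousComponent (k + l.length) p) := by
  induction l generalizing k p with
  | nil => rfl
  | cons i l ih =>
    simp only [iteratedPDeriv, ih, homogeneousComponent_pderiv, List.length_cons, add_assoc]

lemma homogeneousComponent_length_ne_zero {l : List σ} {p : MvPolynomial σ R}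
    (h : constantCoeff (iteratedPDeriv l p) ≠ 0) : homogeneousComponent l.length p ≠ 0 := by
  intro h0
  have := homogeneousComponent_iteratedPDeriv l 0 p
  rw [zero_add, h0, iteratedPDeriv_zero, homogeneousComponent_zero, C_eq_zero] at this
  exact h (by rwa [constantCoeff_eq])

noncomputable def taylor (c : σ → R) : MvPolynomial σ R →ₐ[R] MvPolynomial σ R :=
  aeval fun j => X j + C (c j)

lemma pderiv_taylor (c : σ → R) (i : σ) (p : MvPolynomial σ R) :
    pderiv i (taylor c p) = taylor c (pderiv i p) := by
  classical
  induction p using MvPolynomial.induction_on with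
  | C a => simp [taylor]
  | add p q hp hq => simp only [map_add, hp, hq]
  | mul_X p j hp =>
    simp only [taylor, Derivation.leibniz, map_mul, map_add, aeval_X, pderiv_X, pderiv_C,
      smul_eq_mul, hp] at hp ⊢
    by_cases hij : i = j
    · subst hij; simp
    · simp [Pi.single_eq_of_ne' hij]

lemma iteratedPDeriv_taylor (c : σ → R) (l : List σ) (p : MvPolynomial σ R) :
    iteratedPDeriv l (taylor c p) = taylor c (iteratedPDeriv l p) := by
  induction l generalizing p with
  | nil => rfl
  | cons i l ih => simp only [iteratedPDeriv, pderiv_taylor, ih]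

lemma constantCoeff_taylor (c : σ → R) (p : MvPolynomial σ R) :
    constantCoeff (taylor c p) = eval c p := by
  rw [← eval_zero, taylor, aeval_def, algebraMap_eq, ← eval_assoc]
  congr with j
  simp

def VanishesToOrder (c : σ → R) : ℕ → MvPolynomial σ R → Prop
  | 0, _ => True
  | m + 1, f => eval c f = 0 ∧ ∀ i, VanishesToOrder c m (pderiv i f)

variable [NoZeroDivisors R] [CharZero R]

lemma homogeneousComponent_succ_eq_zero_iff [Fintype σ] (k : ℕ) (p : MvPolynomial σ R) :
    homogeneousComponent (k + 1) p = 0 ↔ ∀ i, homogeneousComponent k (pderiv i p) = 0 := by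
  simp only [homogeneousComponent_pderiv]
  refine ⟨fun h i => by rw [h, map_zero], fun h => ?_⟩
  have euler := (homogeneousComponent_isHomogeneous (k + 1) p).sum_X_mul_pderiv
  simpa [h, Nat.cast_add_one_ne_zero] using euler.symm

lemma forall_lt_homogeneousComponent_taylor_eq_zero_iff [Fintype σ] (c : σ → R) (m : ℕ)
    (f : MvPolynomial σ R) :
    (∀ k < m, homogeneousComponent k (taylor c f) = 0) ↔ VanishesToOrder c m f := by
  induction m generalizing f with
  | zero => simp [VanishesToOrder]
  | succ m ih =>
    simp only [VanishesToOrder, ← ih, Nat.forall_lt_succ_left, homogeneousComponent_zero, C_eq_zero,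
      ← constantCoeff_eq, constantCoeff_taylor, homogeneousComponent_succ_eq_zero_iff,
      pderiv_taylor]
    exact and_congr_right fun _ => ⟨fun h i k hk => h k hk i, fun h k hk i => h i k hk⟩

end MvPolynomial

lemma shiftAt_eq_taylor (a b : ℂ) (f : MvPolynomial (Fin 2) ℂ) :
    shiftAt a b f = taylor ![a, b] f := by
  rw [shiftAt, taylor]
  congr with j
  fin_cases j <;> rfl

lemma multIs_shiftAt_of_vanishesToOrder {a b : ℂ} {f : MvPolynomial (Fin 2) ℂ} (l : List (Fin 2))
    (hf : VanishesToOrder ![a, b] l.length f) (hl : eval ![a, b] (iteratedPDeriv l f) ≠ 0) :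
    multIs (shiftAt a b f) l.length := by
  rw [shiftAt_eq_taylor]
  refine ⟨(forall_lt_homogeneousComponent_taylor_eq_zero_iff _ _ _).2 hf,
    homogeneousComponent_length_ne_zero ?_⟩
  rwa [iteratedPDeriv_taylor, constantCoeff_taylor]

lemma multIs_f₇_p₀ : multIs (shiftAt 0 0 f₇) 3 := by
  refine multIs_shiftAt_of_vanishesToOrder [0, 0, 0] ?_ ?_
  · simp only [VanishesToOrder, List.length_cons, List.length_nil, Fin.forall_fin_two, and_true]
    and_intros <;> simp [f₇, pderiv_X, pderiv_ofNat]
  · simp [iteratedPDeriv, f₇, pderiv_X, pderiv_ofNat]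

lemma multIs_f₇_p₅ : multIs (shiftAt 3 (2 * Complex.I) f₇) 3 := by
  refine multIs_shiftAt_of_vanishesToOrder [0, 0, 0] ?_ ?_
  · simp only [VanishesToOrder, List.length_cons, List.length_nil, Fin.forall_fin_two, and_true]
    and_intros <;> simp [f₇, pderiv_X, pderiv_ofNat] <;> grind [Complex.I_sq]
  · simp [iteratedPDeriv, f₇, pderiv_X, pderiv_ofNat]
    grind [Complex.I_sq]

lemma multIs_f₇_p₁ : multIs (shiftAt (-2) 1 f₇) 2 := by
  refine multIs_shiftAt_of_vanishesToOrder [0, 0] ?_ ?_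
  · simp only [VanishesToOrder, List.length_cons, List.length_nil, Fin.forall_fin_two, and_true]
    and_intros <;> simp [f₇, pderiv_X, pderiv_ofNat] <;> grind [Complex.I_sq]
  · simp [iteratedPDeriv, f₇, pderiv_X, pderiv_ofNat]
    grind [Complex.I_sq]

lemma multIs_f₇_p₂ : multIs (shiftAt 2 1 f₇) 2 := by
  refine multIs_shiftAt_of_vanishesToOrder [0, 0] ?_ ?_
  · simp only [VanishesToOrder, List.length_cons, List.length_nil, Fin.forall_fin_two, and_true]
    and_intros <;> simp [f₇, pderiv_X, pderiv_ofNat] <;> grind [Complex.I_sq]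
  · simp [iteratedPDeriv, f₇, pderiv_X, pderiv_ofNat]
    grind [Complex.I_sq]

lemma multIs_f₇_p₃ : multIs (shiftAt (-1) 2 f₇) 2 := by
  refine multIs_shiftAt_of_vanishesToOrder [0, 0] ?_ ?_
  · simp only [VanishesToOrder, List.length_cons, List.length_nil, Fin.forall_fin_two, and_true]
    and_intros <;> simp [f₇, pderiv_X, pderiv_ofNat] <;> grind [Complex.I_sq]
  · simp [iteratedPDeriv, f₇, pderiv_X, pderiv_ofNat]
    grind [Complex.I_sq]

lemma multIs_f₇_p₄ : multIs (shiftAt 1 2 f₇) 2 := by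
  refine multIs_shiftAt_of_vanishesToOrder [0, 0] ?_ ?_
  · simp only [VanishesToOrder, List.length_cons, List.length_nil, Fin.forall_fin_two, and_true]
    and_intros <;> simp [f₇, pderiv_X, pderiv_ofNat] <;> grind [Complex.I_sq]
  · simp [iteratedPDeriv, f₇, pderiv_X, pderiv_ofNat]
    grind [Complex.I_sq]

/-- C₇ has multiplicity exactly 3 at p₀ = [0:0:1] and p₅ = [3:2i:1], and
multiplicity exactly 2 at p₁ = [-2:1:1], p₂ = [2:1:1], p₃ = [-1:2:1], p₄ = [1:2:1]. -/
theorem stmt17 :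
    multIs (shiftAt 0 0 f₇) 3 ∧
    multIs (shiftAt 3 (2 * Complex.I) f₇) 3 ∧
    multIs (shiftAt (-2) 1 f₇) 2 ∧
    multIs (shiftAt 2 1 f₇) 2 ∧
    multIs (shiftAt (-1) 2 f₇) 2 ∧
    multIs (shiftAt 1 2 f₇) 2 :=
  ⟨multIs_f₇_p₀, multIs_f₇_p₅, multIs_f₇_p₁, multIs_f₇_p₂, multIs_f₇_p₃, multIs_f₇_p₄⟩
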